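/- Let N ∈ ℕ and f¹,…,f^K ∈ ℓ_∞ with ‖f^i‖_N = 1 for each i. Then there exists h ∈ c_0 with ‖h‖_N = 1 such that ‖f^i + h‖_N ≤ 1 + 1/N and ‖f^i − h‖_N ≤ 1 + 1/N for every i = 1,…,K. -/

import Mathlib

open Finset Filter

/-- The block `E_n = {2^n, …, 2^{n+1} - 1}`. -/
def blockE (n : ℕ) : Finset ℕ := Finset.Ico (2 ^ n) (2 ^ (n + 1))

/-- The value set `{|f(x)| : x ∈ D_N}` where `D_N = C ∪ B ∪ A_N`:
`A_N` are the averaging functionals `(1/N)∑_{j∈A} e_j*` over sets of size `kN`,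
`B = {(1/k) e_j*}`, and `C = ⋃_{n≥1} C_n` with
`C_n = {(1/2)e_l* ± (1/2)e_m* : l ≠ m ∈ E_n}`. -/
def valueSetN (k N : ℕ) (f : ℕ → ℝ) : Set ℝ :=
  {r | ∃ A : Finset ℕ, A.card = k * N ∧ r = |∑ j ∈ A, f j| / N} ∪
  {r | ∃ j : ℕ, r = |f j| / k} ∪
  {r | ∃ n l m : ℕ, 1 ≤ n ∧ l ∈ blockE n ∧ m ∈ blockE n ∧ l ≠ m ∧
        (r = |f l / 2 + f m / 2| ∨ r = |f l / 2 - f m / 2|)}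

/-- The norm `‖f‖_N = sup_{x ∈ D_N} |f(x)|` on `ℓ_∞`. -/
noncomputable def normN (k N : ℕ) (f : ℕ → ℝ) : ℝ :=
  sSup (valueSetN k N f)

/-!
Since `‖f‖_N ≤ 1` bounds every average `(1/N)∑_{j∈A} f j` over `kN` coordinates, only finitely
many coordinates of `f` exceed `1/k ≤ 1/2` in absolute value. Take a block `E_n` beyond all of
them for `f¹, …, f^K`, with `2^n > (2N+1)^K`; by pigeonhole on `⌊N f^i(j)⌋` it contains `l ≠ m`
with `|f^i(l) - f^i(m)| ≤ 1/N` for all `i`, and `h = e_l - e_m` works. On `A_N` the vector `h`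
adds at most `1/N`, on `B` and on pairs meeting `{l, m}` in one point the bound `1/2` keeps
the value at most `1`, and on the pair `{l, m}` itself the value is `|f(l) - f(m)|/2 + 1` or
`|f(l) + f(m)|/2`.
-/

lemma card_blockE (n : ℕ) : #(blockE n) = 2 ^ n := by
  rw [blockE, Nat.card_Ico, pow_succ]
  omega

lemma log_two_of_mem_blockE {n l : ℕ} (hl : l ∈ blockE n) : Nat.log 2 l = n :=
  Nat.log_eq_of_pow_le_of_lt_pow (mem_Ico.mp hl).1 (mem_Ico.mp hl).2

lemma exists_blockE_forall {p : ℕ → Prop} (hp : ∀ᶠ j in atTop, p j) (B : ℕ) :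
    ∃ n, 1 ≤ n ∧ B < #(blockE n) ∧ ∀ j ∈ blockE n, p j := by
  obtain ⟨J, hJ⟩ := eventually_atTop.mp hp
  have hlt := Nat.lt_two_pow_self (n := J + B + 1)
  refine ⟨J + B + 1, by omega, by rw [card_blockE]; omega, fun j hj => hJ j ?_⟩
  have := (mem_Ico.mp hj).1
  omega

section ValueSet

variable {k N : ℕ} {f : ℕ → ℝ}

lemma sum_mem_valueSetN {A : Finset ℕ} (hA : #A = k * N) :
    |∑ j ∈ A, f j| / N ∈ valueSetN k N f :=
  Or.inl (Or.inl ⟨A, hA, rfl⟩)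

lemma coord_mem_valueSetN (j : ℕ) : |f j| / k ∈ valueSetN k N f :=
  Or.inl (Or.inr ⟨j, rfl⟩)

lemma pair_mem_valueSetN {n l m : ℕ} (hn : 1 ≤ n) (hl : l ∈ blockE n) (hm : m ∈ blockE n)
    (hlm : l ≠ m) :
    |f l / 2 + f m / 2| ∈ valueSetN k N f ∧ |f l / 2 - f m / 2| ∈ valueSetN k N f :=
  ⟨Or.inr ⟨n, l, m, hn, hl, hm, hlm, Or.inl rfl⟩, Or.inr ⟨n, l, m, hn, hl, hm, hlm, Or.inr rfl⟩⟩

lemma valueSetN_neg : valueSetN k N (-f) = valueSetN k N f := by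
  have hadd (a b : ℝ) : |-(a / 2) + -(b / 2)| = |a / 2 + b / 2| := by rw [← neg_add, abs_neg]
  have hsub (a b : ℝ) : |-(a / 2) - -(b / 2)| = |a / 2 - b / 2| := by rw [← abs_neg]; ring_nf
  simp only [valueSetN, Pi.neg_apply, sum_neg_distrib, abs_neg, neg_div, hadd, hsub]

lemma normN_le {c : ℝ} (h : ∀ r ∈ valueSetN k N f, r ≤ c) : normN k N f ≤ c :=
  csSup_le ⟨_, coord_mem_valueSetN 0⟩ h

lemma bddAbove_valueSetN_of_normN_ne_zero (h : normN k N f ≠ 0) :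
    BddAbove (valueSetN k N f) := by
  contrapose! h
  exact Real.sSup_of_not_bddAbove h

end ValueSet

section Decay

variable {k N : ℕ} {f : ℕ → ℝ}

/-- Infinitely many coordinates above `1/k` would give a set `A` of size `kN` with
`∑_{j∈A} f j > N`. -/
lemma finite_setOf_inv_lt (hk : 0 < k) (hN : 0 < N) (hf : ∀ r ∈ valueSetN k N f, r ≤ 1) :
    {j | (k : ℝ)⁻¹ < f j}.Finite := by
  by_contra hinf
  obtain ⟨A, hAsub, hA⟩ := Set.Infinite.exists_subset_card_eq hinf (k * N)
  have hNpos : (0 : ℝ) < N := by exact_mod_cast hN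
  have hAne : A.Nonempty := card_pos.mp (by rw [hA]; positivity)
  have hlt : (N : ℝ) < ∑ j ∈ A, f j :=
    calc (N : ℝ) = ∑ _j ∈ A, (k : ℝ)⁻¹ := by
          rw [sum_const, hA, nsmul_eq_mul]; push_cast; field_simp
      _ < ∑ j ∈ A, f j := sum_lt_sum_of_nonempty hAne fun j hj => hAsub (mem_coe.mpr hj)
  have hle : |∑ j ∈ A, f j| / N ≤ 1 := hf _ (sum_mem_valueSetN hA)
  rw [div_le_one hNpos] at hle
  linarith [le_abs_self (∑ j ∈ A, f j)]

lemma eventually_abs_le_inv (hk : 0 < k) (hN : 0 < N) (hf : ∀ r ∈ valueSetN k N f, r ≤ 1) :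
    ∀ᶠ j in atTop, |f j| ≤ (k : ℝ)⁻¹ := by
  have hneg : ∀ r ∈ valueSetN k N (-f), r ≤ 1 := valueSetN_neg (f := f) ▸ hf
  have hfin := (finite_setOf_inv_lt hk hN hf).union (finite_setOf_inv_lt hk hN hneg)
  rw [← Nat.cofinite_eq_atTop]
  filter_upwards [hfin.eventually_cofinite_notMem] with j hj
  simp only [Set.mem_union, Set.mem_ofPred_eq, Pi.neg_apply, not_or, not_lt] at hj
  exact abs_le.mpr ⟨by linarith, hj.1⟩

end Decay

/-- Pigeonhole on the integer parts `⌊N g_i(j)⌋ ∈ [-N, N]`. -/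
lemma exists_ne_forall_abs_sub_le {ι α : Type*} [Fintype ι] [DecidableEq ι] {N : ℕ} (hN : 0 < N)
    (g : ι → α → ℝ) {S : Finset α} (hS : (2 * N + 1) ^ Fintype.card ι < #S)
    (hg : ∀ i, ∀ j ∈ S, |g i j| ≤ 1) :
    ∃ l ∈ S, ∃ m ∈ S, l ≠ m ∧ ∀ i, |g i l - g i m| ≤ 1 / N := by
  have hNpos : (0 : ℝ) < N := by exact_mod_cast hN
  have hmaps : ∀ j ∈ S, (fun i => ⌊N * g i j⌋) ∈
      Fintype.piFinset fun _ : ι => Icc (-(N : ℤ)) N := by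
    intro j hj
    simp only [Fintype.mem_piFinset, mem_Icc]
    intro i
    obtain ⟨hlo, hhi⟩ := abs_le.mp (hg i j hj)
    constructor
    · rw [Int.le_floor]; push_cast; nlinarith
    · rw [Int.floor_le_iff]; push_cast; nlinarith
  have hcard : #(Fintype.piFinset fun _ : ι => Icc (-(N : ℤ)) N) < #S := by
    rw [Fintype.card_piFinset, prod_const, Int.card_Icc, card_univ]
    convert hS
    omega
  obtain ⟨l, hl, m, hm, hlm, heq⟩ := exists_ne_map_eq_of_card_lt_of_maps_to hcard hmaps
  refine ⟨l, hl, m, hm, hlm, fun i => ?_⟩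
  have h := Int.abs_sub_lt_one_of_floor_eq_floor (congrFun heq i)
  rw [← mul_sub, abs_mul, abs_of_pos hNpos] at h
  rw [le_div_iff₀ hNpos]
  linarith

def basisDiff (l m : ℕ) : ℕ → ℝ := Pi.single l 1 - Pi.single m 1

section BasisDiff

variable {l m j : ℕ}

lemma basisDiff_apply_left (hlm : l ≠ m) : basisDiff l m l = 1 := by
  simp [basisDiff, hlm]

lemma basisDiff_apply_right (hlm : l ≠ m) : basisDiff l m m = -1 := by
  simp [basisDiff, hlm.symm]

lemma basisDiff_apply_of_ne (hl : j ≠ l) (hm : j ≠ m) : basisDiff l m j = 0 := by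
  simp [basisDiff, hl, hm]

lemma abs_basisDiff_le : |basisDiff l m j| ≤ 1 := by
  simp only [basisDiff, Pi.sub_apply, Pi.single_apply]
  split_ifs <;> norm_num

lemma abs_sum_basisDiff_le (A : Finset ℕ) : |∑ j ∈ A, basisDiff l m j| ≤ 1 := by
  simp only [basisDiff, Pi.sub_apply, sum_sub_distrib, sum_pi_single']
  split_ifs <;> norm_num

lemma eq_or_eq_of_basisDiff_ne_zero (h : basisDiff l m j ≠ 0) : j = l ∨ j = m := by
  by_contra! hj
  exact h (basisDiff_apply_of_ne hj.1 hj.2)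

lemma neg_basisDiff : -basisDiff l m = basisDiff m l :=
  neg_sub _ _

lemma tendsto_basisDiff : Tendsto (basisDiff l m) atTop (nhds 0) := by
  refine tendsto_const_nhds.congr' ?_
  filter_upwards [eventually_gt_atTop (max l m)] with j hj
  exact (basisDiff_apply_of_ne (by omega) (by omega)).symm

end BasisDiff

lemma div_natCast_le_one {a : ℝ} (ha₀ : 0 ≤ a) (ha₁ : a ≤ 1) (n : ℕ) : a / n ≤ 1 := by
  rcases n.eq_zero_or_pos with rfl | hn
  · simp
  · exact (div_le_self ha₀ (by exact_mod_cast hn)).trans ha₁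

lemma normN_basisDiff {k N n l m : ℕ} (hn : 1 ≤ n) (hl : l ∈ blockE n) (hm : m ∈ blockE n)
    (hlm : l ≠ m) : normN k N (basisDiff l m) = 1 := by
  have hvals : ∀ r ∈ valueSetN k N (basisDiff l m), r ≤ 1 := by
    rintro r ((⟨A, -, rfl⟩ | ⟨j, rfl⟩) | ⟨n', l', m', -, -, -, -, rfl | rfl⟩)
    · exact div_natCast_le_one (abs_nonneg _) (abs_sum_basisDiff_le A) N
    · exact div_natCast_le_one (abs_nonneg _) abs_basisDiff_le k
    all_goals
      obtain ⟨hl₁, hl₂⟩ := abs_le.mp (abs_basisDiff_le (l := l) (m := m) (j := l'))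
      obtain ⟨hm₁, hm₂⟩ := abs_le.mp (abs_basisDiff_le (l := l) (m := m) (j := m'))
      exact abs_le.mpr ⟨by linarith, by linarith⟩
  refine le_antisymm (normN_le hvals) (le_csSup ⟨1, hvals⟩ ?_)
  have hsub := (pair_mem_valueSetN (k := k) (N := N) (f := basisDiff l m) hn hl hm hlm).2
  rwa [basisDiff_apply_left hlm, basisDiff_apply_right hlm, show |(1 : ℝ) / 2 - -1 / 2| = 1 by
    norm_num] at hsub

section AddBasisDiff

variable {k N n l m : ℕ} {f : ℕ → ℝ}

lemma sum_value_add_basisDiff_le (hf : ∀ r ∈ valueSetN k N f, r ≤ 1) {A : Finset ℕ}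
    (hA : #A = k * N) : |∑ j ∈ A, (f + basisDiff l m) j| / N ≤ 1 + 1 / N := by
  calc |∑ j ∈ A, (f + basisDiff l m) j| / N
      ≤ |∑ j ∈ A, f j| / N + |∑ j ∈ A, basisDiff l m j| / N := by
        rw [← add_div, Pi.add_def, sum_add_distrib]
        gcongr
        exact abs_add_le _ _
    _ ≤ 1 + 1 / N := by
        gcongr
        · exact hf _ (sum_mem_valueSetN hA)
        · exact abs_sum_basisDiff_le A

lemma coord_value_add_basisDiff_le (hk : 2 ≤ k) (hf : ∀ r ∈ valueSetN k N f, r ≤ 1)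
    (hl : l ∈ blockE n) (hm : m ∈ blockE n) (hsmall : ∀ j ∈ blockE n, |f j| ≤ 1 / 2) (j : ℕ) :
    |(f + basisDiff l m) j| / k ≤ 1 + 1 / N := by
  have hk' : (2 : ℝ) ≤ k := by exact_mod_cast hk
  have hN' : (0 : ℝ) ≤ 1 / N := by positivity
  by_cases hj : j = l ∨ j = m
  · have hjn : j ∈ blockE n := by rcases hj with rfl | rfl <;> assumption
    have hval : |(f + basisDiff l m) j| ≤ 3 / 2 :=
      (abs_add_le _ _).trans (by linarith [hsmall j hjn, abs_basisDiff_le (l := l) (m := m) (j := j)])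
    rw [div_le_iff₀ (by positivity)]
    nlinarith
  · rw [not_or] at hj
    rw [Pi.add_apply, basisDiff_apply_of_ne hj.1 hj.2, add_zero]
    linarith [hf _ (coord_mem_valueSetN (N := N) j)]

lemma pair_value_add_basisDiff_le (hf : ∀ r ∈ valueSetN k N f, r ≤ 1)
    (hl : l ∈ blockE n) (hm : m ∈ blockE n) (hlm : l ≠ m)
    (hsmall : ∀ j ∈ blockE n, |f j| ≤ 1 / 2) (hclose : |f l - f m| ≤ 1 / N)
    {n' l' m' : ℕ} (hn' : 1 ≤ n') (hl' : l' ∈ blockE n') (hm' : m' ∈ blockE n') (hlm' : l' ≠ m') :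
    |(f + basisDiff l m) l' / 2 + (f + basisDiff l m) m' / 2| ≤ 1 + 1 / N ∧
      |(f + basisDiff l m) l' / 2 - (f + basisDiff l m) m' / 2| ≤ 1 + 1 / N := by
  have hN' : (0 : ℝ) ≤ 1 / N := by positivity
  by_cases hout : basisDiff l m l' = 0 ∧ basisDiff l m m' = 0
  · simp only [Pi.add_apply, hout.1, hout.2, add_zero]
    have hmem := pair_mem_valueSetN (k := k) (N := N) (f := f) hn' hl' hm' hlm'
    exact ⟨(hf _ hmem.1).trans (by linarith), (hf _ hmem.2).trans (by linarith)⟩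
  -- A pair functional touching `{l, m}` lives on the block `E_n`, where `f` is at most `1/2`.
  have hlog {j : ℕ} (hj : basisDiff l m j ≠ 0) : Nat.log 2 j = n := by
    rcases eq_or_eq_of_basisDiff_ne_zero hj with rfl | rfl
    exacts [log_two_of_mem_blockE hl, log_two_of_mem_blockE hm]
  have hn'n : n' = n := by
    rcases not_and_or.mp hout with h | h
    exacts [(log_two_of_mem_blockE hl').symm.trans (hlog h),
      (log_two_of_mem_blockE hm').symm.trans (hlog h)]
  rw [hn'n] at hl' hm'
  by_cases hboth : basisDiff l m l' ≠ 0 ∧ basisDiff l m m' ≠ 0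
  · have hpair : (l' = l ∧ m' = m) ∨ (l' = m ∧ m' = l) := by
      have := eq_or_eq_of_basisDiff_ne_zero hboth.1
      have := eq_or_eq_of_basisDiff_ne_zero hboth.2
      omega
    obtain ⟨hc₁, hc₂⟩ := abs_le.mp hclose
    obtain ⟨hs₁, hs₂⟩ := abs_le.mp (hsmall l hl)
    obtain ⟨hs₃, hs₄⟩ := abs_le.mp (hsmall m hm)
    rcases hpair with ⟨rfl, rfl⟩ | ⟨rfl, rfl⟩ <;>
      simp only [Pi.add_apply, basisDiff_apply_left hlm, basisDiff_apply_right hlm] <;>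
      exact ⟨abs_le.mpr ⟨by linarith, by linarith⟩, abs_le.mpr ⟨by linarith, by linarith⟩⟩
  -- Otherwise at most one of the two coordinates is moved, by at most `1`.
  have hmoved : |basisDiff l m l'| + |basisDiff l m m'| ≤ 1 := by
    rw [not_and_or, not_not, not_not] at hboth
    rcases hboth with h | h <;> simp only [h, abs_zero, zero_add, add_zero] <;>
      exact abs_basisDiff_le
  have hg (j : ℕ) (hj : j ∈ blockE n) : |(f + basisDiff l m) j| ≤ 1 / 2 + |basisDiff l m j| :=
    (abs_add_le _ _).trans (by linarith [hsmall j hj])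
  obtain ⟨h₁, h₂⟩ := abs_le.mp (hg l' hl')
  obtain ⟨h₃, h₄⟩ := abs_le.mp (hg m' hm')
  exact ⟨abs_le.mpr ⟨by linarith, by linarith⟩, abs_le.mpr ⟨by linarith, by linarith⟩⟩

lemma normN_add_basisDiff_le (hk : 2 ≤ k) (hf : ∀ r ∈ valueSetN k N f, r ≤ 1)
    (hl : l ∈ blockE n) (hm : m ∈ blockE n) (hlm : l ≠ m)
    (hsmall : ∀ j ∈ blockE n, |f j| ≤ 1 / 2) (hclose : |f l - f m| ≤ 1 / N) :
    normN k N (f + basisDiff l m) ≤ 1 + 1 / N := by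
  refine normN_le ?_
  rintro r ((⟨A, hA, rfl⟩ | ⟨j, rfl⟩) | ⟨n', l', m', hn', hl', hm', hlm', rfl | rfl⟩)
  · exact sum_value_add_basisDiff_le hf hA
  · exact coord_value_add_basisDiff_le hk hf hl hm hsmall j
  · exact (pair_value_add_basisDiff_le hf hl hm hlm hsmall hclose hn' hl' hm' hlm').1
  · exact (pair_value_add_basisDiff_le hf hl hm hlm hsmall hclose hn' hl' hm' hlm').2

end AddBasisDiff

theorem normN_almost_square_general (k N : ℕ) (hk : 2 ≤ k) (hN : 1 ≤ N)
    (K : ℕ) (f : Fin K → ℕ → ℝ)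
    (hf : ∀ i, normN k N (f i) = 1) :
    ∃ h : ℕ → ℝ, Tendsto h atTop (nhds 0) ∧ normN k N h = 1 ∧
      ∀ i, normN k N (f i + h) ≤ 1 + 1 / N ∧ normN k N (f i - h) ≤ 1 + 1 / N := by
  have hvals (i) : ∀ r ∈ valueSetN k N (f i), r ≤ 1 := fun r hr =>
    hf i ▸ le_csSup (bddAbove_valueSetN_of_normN_ne_zero (by simp [hf i])) hr
  have hinv : (k : ℝ)⁻¹ ≤ 1 / 2 := by
    rw [one_div]; gcongr; exact_mod_cast hk
  obtain ⟨n, hn, hcard, hsmall⟩ := exists_blockE_forall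
    (eventually_all.mpr fun i => (eventually_abs_le_inv (by omega) (by omega) (hvals i)).mono
      fun j hj => hj.trans hinv) ((2 * N + 1) ^ Fintype.card (Fin K))
  obtain ⟨l, hl, m, hm, hlm, hclose⟩ := exists_ne_forall_abs_sub_le hN f hcard
    fun i j hj => (hsmall j hj i).trans (by norm_num)
  refine ⟨basisDiff l m, tendsto_basisDiff, normN_basisDiff hn hl hm hlm,
    fun i => ⟨?_, ?_⟩⟩
  · exact normN_add_basisDiff_le hk (hvals i) hl hm hlm (fun j hj => hsmall j hj i) (hclose i)
  · rw [sub_eq_add_neg, neg_basisDiff]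
    exact normN_add_basisDiff_le hk (hvals i) hm hl hlm.symm (fun j hj => hsmall j hj i)
      (abs_sub_comm (f i l) (f i m) ▸ hclose i)

/-- `(ℓ_∞, ‖·‖_N)` is almost square up to `1/N`: for norm-one
`f¹, …, f^K` there is `h ∈ c_0` with `‖h‖_N = 1` and
`‖f^i ± h‖_N ≤ 1 + 1/N` for all `i`. -/
theorem normN_almost_square (k N : ℕ) (hk : 2 ≤ k) (hN : 1 ≤ N)
    (K : ℕ) (f : Fin K → ℕ → ℝ)
    (hb : ∀ i, ∃ M : ℝ, ∀ j, |f i j| ≤ M)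
    (hf : ∀ i, normN k N (f i) = 1) :
    ∃ h : ℕ → ℝ, Tendsto h atTop (nhds 0) ∧ normN k N h = 1 ∧
      ∀ i, normN k N (f i + h) ≤ 1 + 1 / N ∧ normN k N (f i - h) ≤ 1 + 1 / N :=
  normN_almost_square_general k N hk hN K f hf
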